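/- Let X be a continuum without cut-points and S_1 ⊆ … ⊆ S_k an increasing sequence of closed subsets of X with S_k ≠ ∅. Then every point (u,0) of J(X,S⃗) with u ∈ X − cl(D_X) (equivalently, u ∈ X − S_k) is a noncut-point of J(X,S⃗), i.e., J(X,S⃗) − {(u,0)} is connected. -/

import Mathlib

open Topology

/-- The set of isolated points of the subspace `S` (computed in the ambient space `W`). -/
def isoPts {W : Type*} [TopologicalSpace W] (S : Set W) : Set W :=
  {p | p ∈ S ∧ 𝓝[S \ {p}] p = ⊥}

/-- The canonical embedding of `X` into the ambient space `X × ℝ^ℕ`. -/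
def embW {X : Type*} (x : X) : X × (ℕ → ℝ) := (x, fun _ => 0)

/-- The canonical copy of `X` inside `X × ℝ^ℕ`. -/
def baseW (X : Type*) : Set (X × (ℕ → ℝ)) := {w | w.2 = fun _ => 0}

/-- Place the value `t` in coordinate `j`. -/
def addC {X : Type*} (j : ℕ) (t : ℝ) (w : X × (ℕ → ℝ)) : X × (ℕ → ℝ) :=
  (w.1, Function.update w.2 j t)

/-- `Z'` is a copy of `I(Z, B; D)` for some admissible `D`, realized using coordinate `j`:
`Z' = Z ∪ D` where `D` is a nonempty set of points `addC j t z` (`z ∈ Z`, `t ∈ (0,1]`),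
each of which is isolated in `Z'`, with `cl(D) − D = B`; by convention `D` is a single point
when `B = ∅`. -/
def IsIStep {X : Type*} [TopologicalSpace X] (j : ℕ)
    (Z B Z' : Set (X × (ℕ → ℝ))) : Prop :=
  ∃ D : Set (X × (ℕ → ℝ)),
    Z' = Z ∪ D ∧ D.Nonempty ∧
    (∀ p ∈ D, ∃ z ∈ Z, ∃ t ∈ Set.Ioc (0 : ℝ) 1, p = addC j t z) ∧
    (∀ p ∈ D, 𝓝[Z' \ {p}] p = ⊥) ∧
    closure D \ D = B ∧
    (B = ∅ → D.Subsingleton)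

/-- The iterated construction: `IsITowerFrom j Z As Z'` says that `Z'` is obtained from `Z`
by successively applying the `I(·, D_k ∪ A_{k+1})` construction along the list `As`,
where `D_k` is the current set of isolated points. -/
def IsITowerFrom {X : Type*} [TopologicalSpace X] :
    ℕ → Set (X × (ℕ → ℝ)) → List (Set X) → Set (X × (ℕ → ℝ)) → Prop
  | _, Z, [], Z' => Z' = Z
  | j, Z, A :: rest, Z' =>
      ∃ Zm, IsIStep j Z (isoPts Z ∪ (embW '' A)) Zm ∧ IsITowerFrom (j + 1) Zm rest Z'

/-- `Z` is a model of `I_n(X, A_1, …, A_n)` where `As = [A_1, …, A_n]`. -/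
def IsIModel {X : Type*} [TopologicalSpace X] (As : List (Set X))
    (Z : Set (X × (ℕ → ℝ))) : Prop :=
  IsITowerFrom 0 (baseW X) As Z


/-- The underlying set of `F(Z,B)`: the subspace `Z×{0} ∪ B×[0,1]` of `Z × [0,1]`. -/
abbrev FPts (Z : Type*) (B : Set Z) := {p : Z × unitInterval // p.2 = 0 ∨ p.1 ∈ B}

/-- The relation identifying all points of `B × {1}` to one point. -/
def FRel {Z : Type*} {B : Set Z} (p q : FPts Z B) : Prop :=
  p = q ∨ (p.val.2 = 1 ∧ q.val.2 = 1)

/-- The space `F(Z,B)`: the quotient of `Z×{0} ∪ B×[0,1]` collapsing `B × {1}` to a point. -/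
abbrev FSp (Z : Type*) [TopologicalSpace Z] (B : Set Z) := Quot (@FRel Z B)

/-- The closure of the set `D_X` of added points, viewed inside the subspace `Z`. -/
def JB {X : Type*} [TopologicalSpace X] (Z : Set (X × (ℕ → ℝ))) : Set ↥Z :=
  {z | (z : X × (ℕ → ℝ)) ∈ closure (Z \ baseW X)}

/-- The space `J(X, S⃗) = F(I(X,S⃗), cl(D_X))`, for `Z` a model of `I(X,S⃗)`. -/
abbrev JSp {X : Type*} [TopologicalSpace X] (Z : Set (X × (ℕ → ℝ))) :=
  FSp (↥Z) (JB Z)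

/-- The point of `J(X,S⃗)` determined by a representative. -/
def JPt {X : Type*} [TopologicalSpace X] (Z : Set (X × (ℕ → ℝ)))
    (p : FPts (↥Z) (JB Z)) : JSp Z := Quot.mk FRel p


/-!
Removing the base point `(u, 0)` leaves the image of `X − {u}` at level `0`, which is connected
because `u` is not a cut-point of `X`, together with the segments `{b} × [0,1]` over the points
`b ∈ cl(D_X)`, all of which meet at the apex. Since `u ∉ cl(D_X)` no segment passes through
`(u, 0)`, and since `S_k ≠ ∅` the set `cl(D_X)` meets `X − {u}`, so the two pieces are glued.
-/

open Set

lemma addC_notMem_baseW {X : Type*} (j : ℕ) {t : ℝ} (ht : t ≠ 0) (w : X × (ℕ → ℝ)) :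
    addC j t w ∉ baseW X := fun h => ht <| by
  simpa [addC] using congrFun (h : (addC j t w).2 = fun _ => 0) j

namespace IsITowerFrom

variable {X : Type*} [TopologicalSpace X]

theorem subset : ∀ {As : List (Set X)} {j : ℕ} {Z Z' : Set (X × (ℕ → ℝ))},
    IsITowerFrom j Z As Z' → Z ⊆ Z'
  | [], _, _, _, h => (h : _ = _) ▸ subset_rfl
  | _ :: _, _, _, _, ⟨_, ⟨_, rfl, _⟩, h⟩ => subset_union_left.trans (subset h)

theorem image_subset_closure : ∀ {As : List (Set X)} {j : ℕ} {Z Z' : Set (X × (ℕ → ℝ))}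
    {A : Set X}, IsITowerFrom j Z As Z' → A ∈ As → embW '' A ⊆ closure (Z' \ baseW X)
  | [], _, _, _, _, _, hA => absurd hA List.not_mem_nil
  | _ :: _, j, _, Z', _, ⟨_, ⟨D, rfl, _, hform, _, hclD, _⟩, h⟩, hA => by
    rcases List.mem_cons.mp hA with rfl | hA
    · have hD : D ⊆ Z' \ baseW X := fun d hd => by
        refine ⟨subset h (mem_union_right _ hd), ?_⟩
        obtain ⟨z, -, t, ht, rfl⟩ := hform d hd
        exact addC_notMem_baseW j ht.1.ne' z
      calc embW '' _ ⊆ closure D \ D := hclD ▸ subset_union_right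
        _ ⊆ closure (Z' \ baseW X) := sdiff_subset.trans (closure_mono hD)
    · exact image_subset_closure h hA

end IsITowerFrom

namespace FSp

theorem eq_of_mk_eq_mk {Z : Type*} {B : Set Z} {p q : FPts Z B}
    (h : Quot.mk FRel p = Quot.mk FRel q) (hq : q.val.2 ≠ 1) : p = q := by
  have hresp : ∀ a b : FPts Z B, FRel a b → (a = q) = (b = q) := by
    rintro a b (rfl | ⟨ha, hb⟩)
    · rfl
    · exact propext ⟨fun h => absurd (h ▸ ha) hq, fun h => absurd (h ▸ hb) hq⟩
  exact cast (congrArg (Quot.lift (· = q) hresp) h).symm rfl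

variable {Z : Type*} [TopologicalSpace Z] {B : Set Z}

def base (z : Z) : FSp Z B := Quot.mk _ ⟨(z, 0), Or.inl rfl⟩

def seg {b : Z} (hb : b ∈ B) (t : unitInterval) : FSp Z B := Quot.mk _ ⟨(b, t), Or.inr hb⟩

theorem continuous_base : Continuous (base : Z → FSp Z B) :=
  continuous_quot_mk.comp ((continuous_id.prodMk continuous_const).subtype_mk _)

theorem continuous_seg {b : Z} (hb : b ∈ B) : Continuous (seg hb) :=
  continuous_quot_mk.comp ((continuous_const.prodMk continuous_id).subtype_mk _)

theorem seg_one {b b' : Z} (hb : b ∈ B) (hb' : b' ∈ B) : seg hb 1 = seg hb' 1 :=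
  Quot.sound (Or.inr ⟨rfl, rfl⟩)

theorem seg_zero {b : Z} (hb : b ∈ B) : seg hb 0 = base b := rfl

theorem base_injective : Function.Injective (base : Z → FSp Z B) := fun _ _ h =>
  congrArg (·.val.1) (eq_of_mk_eq_mk h (by simp))

theorem seg_ne_base {b z : Z} (hb : b ∈ B) (t : unitInterval) (hz : z ∉ B) :
    seg hb t ≠ base z := fun h => by
  obtain rfl : b = z := congrArg (fun p : FPts Z B => p.val.1) (eq_of_mk_eq_mk h (by simp))
  exact hz hb

theorem isPreconnected_iUnion_range_seg (hB : B.Nonempty) :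
    IsPreconnected (⋃ b : B, range (seg b.2)) := by
  obtain ⟨b₀, hb₀⟩ := hB
  refine isPreconnected_iUnion ⟨seg hb₀ 1, mem_iInter.mpr fun b => ⟨1, seg_one _ _⟩⟩
    fun b => isPreconnected_range (continuous_seg b.2)

theorem compl_base_eq {P : Set Z} {z₀ : Z} (hz₀P : z₀ ∉ P) (hz₀B : z₀ ∉ B)
    (hcover : ∀ z, z ≠ z₀ → z ∈ P ∨ z ∈ B) :
    ({base z₀}ᶜ : Set (FSp Z B)) = base '' P ∪ ⋃ b : B, range (seg b.2) := by
  ext y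
  constructor
  · obtain ⟨⟨⟨z, t⟩, h0 | hz⟩, rfl⟩ := Quot.exists_rep y
    · intro hy
      obtain rfl : t = 0 := h0
      have hzz₀ : z ≠ z₀ := by rintro rfl; exact hy rfl
      rcases hcover z hzz₀ with hz | hz
      · exact Or.inl ⟨z, hz, rfl⟩
      · exact Or.inr (mem_iUnion.mpr ⟨⟨z, hz⟩, 0, rfl⟩)
    · exact fun _ => Or.inr (mem_iUnion.mpr ⟨⟨z, hz⟩, t, rfl⟩)
  · rintro (⟨z, hz, rfl⟩ | hy)
    · exact fun h => hz₀P (base_injective h ▸ hz)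
    · obtain ⟨b, t, rfl⟩ := mem_iUnion.mp hy
      exact seg_ne_base b.2 t hz₀B

theorem isConnected_compl_base {P : Set Z} (hP : IsPreconnected P) {z₀ : Z} (hz₀P : z₀ ∉ P)
    (hz₀B : z₀ ∉ B) (hcover : ∀ z, z ≠ z₀ → z ∈ P ∨ z ∈ B) (hPB : (P ∩ B).Nonempty) :
    IsConnected ({base z₀}ᶜ : Set (FSp Z B)) := by
  obtain ⟨b, hbP, hbB⟩ := hPB
  rw [compl_base_eq hz₀P hz₀B hcover]
  refine ⟨⟨base b, Or.inl ⟨b, hbP, rfl⟩⟩, ?_⟩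
  refine (hP.image _ continuous_base.continuousOn).union (base b) ⟨b, hbP, rfl⟩
    (mem_iUnion.mpr ⟨⟨b, hbB⟩, 0, seg_zero hbB⟩) (isPreconnected_iUnion_range_seg ⟨b, hbB⟩)

end FSp

theorem stmt17_general {X : Type} [MetricSpace X]
    (hXnc : ∀ x : X, IsPreconnected ({x}ᶜ : Set X))
    {k : ℕ} (S : Fin (k + 1) → Set X)
    (hSne : S (Fin.last k) ≠ ∅)
    (Z : Set (X × (ℕ → ℝ))) (hZ : IsIModel (List.ofFn S) Z)
    (u : X × (ℕ → ℝ)) (huB : u ∈ baseW X) (huD : u ∉ closure (Z \ baseW X)) :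
    ∀ q : JSp Z,
      (∃ p : FPts (↥Z) (JB Z), JPt Z p = q ∧
          (p.val.1 : X × (ℕ → ℝ)) = u ∧ p.val.2 = 0) →
      IsConnected ({q}ᶜ : Set (JSp Z)) := by
  rintro _ ⟨⟨⟨z₀, _⟩, _⟩, rfl, rfl, rfl⟩
  replace huB : (z₀ : X × (ℕ → ℝ)) ∈ baseW X := huB
  replace huD : (z₀ : X × (ℕ → ℝ)) ∉ closure (Z \ baseW X) := huD
  have hbase : baseW X ⊆ Z := IsITowerFrom.subset hZ
  let ι : X → Z := fun x => ⟨embW x, hbase rfl⟩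
  have hι : Continuous ι := ((continuous_id.prodMk continuous_const).subtype_mk _)
  have hz₀ : ι z₀.1.1 = z₀ := Subtype.ext (Prod.ext rfl huB.symm)
  obtain ⟨s, hs⟩ := nonempty_iff_ne_empty.mpr hSne
  have hsD : embW s ∈ closure (Z \ baseW X) :=
    IsITowerFrom.image_subset_closure hZ (List.mem_ofFn.mpr ⟨Fin.last k, rfl⟩) ⟨s, hs, rfl⟩
  refine FSp.isConnected_compl_base (P := ι '' {z₀.1.1}ᶜ) ((hXnc _).image _ hι.continuousOn)
    (fun ⟨x, hx, hxz⟩ => hx (congrArg (fun z : Z => z.1.1) hxz)) huD (fun z hz => ?_)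
    ⟨ι s, ⟨s, fun h => huD (by rw [← hz₀, ← h]; exact hsD), rfl⟩, hsD⟩
  by_cases hzX : (z : X × (ℕ → ℝ)) ∈ baseW X
  · have hιz : ι z.1.1 = z := Subtype.ext (Prod.ext rfl hzX.symm)
    exact Or.inl ⟨z.1.1, fun h => hz (by rw [← hιz, ← hz₀, eq_of_mem_singleton h]), hιz⟩
  · exact Or.inr (subset_closure ⟨z.2, hzX⟩)

theorem stmt17 {X : Type} [MetricSpace X] [CompactSpace X] [ConnectedSpace X]
    (hXnc : ∀ x : X, IsPreconnected ({x}ᶜ : Set X))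
    {k : ℕ} (S : Fin (k + 1) → Set X)
    (hScl : ∀ i, IsClosed (S i)) (hSmono : Monotone S) (hSne : S (Fin.last k) ≠ ∅)
    (Z : Set (X × (ℕ → ℝ))) (hZ : IsIModel (List.ofFn S) Z)
    (u : X × (ℕ → ℝ)) (huB : u ∈ baseW X) (huD : u ∉ closure (Z \ baseW X)) :
    ∀ q : JSp Z,
      (∃ p : FPts (↥Z) (JB Z), JPt Z p = q ∧
          (p.val.1 : X × (ℕ → ℝ)) = u ∧ p.val.2 = 0) →
      IsConnected ({q}ᶜ : Set (JSp Z)) :=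
  stmt17_general hXnc S hSne Z hZ u huB huD
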